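/- (Lemma 2.) If N₁ > γ/β and N₂ > 0, then there exists a unique time t*_I > 0 with S(t*_I) = γ/β; moreover I'(t) > 0 for all t ∈ [0, t*_I), I'(t*_I) = 0 and I'(t) < 0 for all t > t*_I, so the infected mass I attains a strict global maximum over [0,∞) at t = t*_I, with peak value I(t*_I) = −γ/β + (γ/β)·ln(γ/β) + C_I, where C_I = N₁ + N₂ − (γ/β)·ln N₁. -/

import Mathlib

/-!
Since `I' = β I (S - γ/β)` and `S' = -β I S`, both `S` and `I` solve linear ODEs and therefore
stay positive (backward Grönwall uniqueness), so `S` is strictly decreasing. While `S > γ/β` the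
infected mass grows, which forces `S' ≤ -γ I(0)`; hence `S` reaches `γ/β` at a unique time `t*`,
where `I'` changes sign from positive to negative. The peak value comes from the first integral
`I + S - (γ/β) log S`.
-/

open Set Real

theorem eqOn_zero_of_hasDerivAt_mul_of_eq_zero_right {f g : ℝ → ℝ} {a b : ℝ}
    (hf : ∀ t ∈ Icc a b, HasDerivAt f (g t * f t) t) (hg : ContinuousOn g (Icc a b))
    (hb : f b = 0) : EqOn f 0 (Icc a b) := by
  obtain ⟨K, hK⟩ := isCompact_Icc.exists_bound_of_continuousOn hg
  have hlip : ∀ t ∈ Ioc a b, LipschitzOnWith K.toNNReal (fun x ↦ g t * x) univ := fun t ht ↦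
    ((lipschitzWith_smul (g t)).weaken
      (NNReal.le_toNNReal_of_coe_le (hK t (Ioc_subset_Icc_self ht)))).lipschitzOnWith
  refine ODE_solution_unique_of_mem_Icc_left (g := 0) hlip (HasDerivAt.continuousOn hf)
    (fun t ht ↦ (hf t (Ioc_subset_Icc_self ht)).hasDerivWithinAt) (fun _ _ ↦ mem_univ _)
    continuousOn_const (fun t _ ↦ ?_) (fun _ _ ↦ mem_univ _) hb
  exact (hasDerivAt_const t (0 : ℝ)).hasDerivWithinAt.congr_deriv (by simp)

theorem pos_of_hasDerivAt_mul {f g : ℝ → ℝ} {a : ℝ}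
    (hf : ∀ t ∈ Ici a, HasDerivAt f (g t * f t) t) (hg : ContinuousOn g (Ici a))
    (ha : 0 < f a) : ∀ t ∈ Ici a, 0 < f t := by
  intro t ht
  by_contra! hft
  obtain ⟨c, hc, hfc⟩ := intermediate_value_Icc' (mem_Ici.mp ht)
    ((HasDerivAt.continuousOn hf).mono Icc_subset_Ici_self) ⟨hft, ha.le⟩
  have hsub : Icc a c ⊆ Ici a := Icc_subset_Ici_self
  have := eqOn_zero_of_hasDerivAt_mul_of_eq_zero_right (fun s hs ↦ hf s (hsub hs))
    (hg.mono hsub) hfc (left_mem_Icc.mpr hc.1)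
  exact ha.ne' this

theorem exists_le_of_hasDerivAt_le_neg {f f' : ℝ → ℝ} {a c : ℝ} (hc : 0 < c)
    (hf : ∀ t ∈ Ici a, HasDerivAt f (f' t) t) (hf' : ∀ t ∈ Ici a, f' t ≤ -c) (y : ℝ) :
    ∃ t ∈ Ici a, f t ≤ y := by
  have hanti : AntitoneOn (fun t ↦ f t + c * t) (Ici a) :=
    antitoneOn_of_hasDerivWithinAt_nonpos (convex_Ici a)
      (HasDerivAt.continuousOn fun t ht ↦ (hf t ht).add ((hasDerivAt_id t).const_mul c))
      (fun t ht ↦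
        ((hf t (interior_subset ht)).add ((hasDerivAt_id t).const_mul c)).hasDerivWithinAt)
      (fun t ht ↦ by linarith [hf' t (interior_subset ht)])
  set T := a + |f a - y| / c
  have haT : a ≤ T := le_add_of_nonneg_right (by positivity)
  refine ⟨T, haT, ?_⟩
  have h := hanti self_mem_Ici haT haT
  have hcT : c * T = c * a + |f a - y| := by simp only [T]; field_simp
  simp only at h
  linarith [le_abs_self (f a - y)]

theorem apply_lt_of_hasDerivAt_pos_left_neg_right {f f' : ℝ → ℝ} {a c : ℝ} (hac : a ≤ c)
    (hf : ∀ t ∈ Ici a, HasDerivAt f (f' t) t)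
    (hpos : ∀ t ∈ Ioo a c, 0 < f' t) (hneg : ∀ t ∈ Ioi c, f' t < 0) :
    ∀ t ∈ Ici a, t ≠ c → f t < f c := by
  intro t ht htc
  rcases htc.lt_or_gt with h | h
  · refine strictMonoOn_of_hasDerivWithinAt_pos (f' := f') (convex_Icc a c)
      (HasDerivAt.continuousOn fun s hs ↦ hf s hs.1) (fun s hs ↦ ?_) (fun s hs ↦ ?_)
      ⟨ht, h.le⟩ ⟨hac, le_rfl⟩ h
    · rw [interior_Icc] at hs
      exact (hf s (le_of_lt hs.1)).hasDerivWithinAt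
    · rw [interior_Icc] at hs
      exact hpos s hs
  · refine strictAntiOn_of_hasDerivWithinAt_neg (f' := f') (convex_Ici c)
      (HasDerivAt.continuousOn fun s hs ↦ hf s (hac.trans hs)) (fun s hs ↦ ?_) (fun s hs ↦ ?_)
      self_mem_Ici h.le h
    · rw [interior_Ici] at hs
      exact (hf s (hac.trans (le_of_lt hs))).hasDerivWithinAt
    · rw [interior_Ici] at hs
      exact hneg s hs

section SIR

variable {β γ : ℝ} {S I : ℝ → ℝ}

theorem sir_S_pos (hS : ∀ t, 0 ≤ t → HasDerivAt S (-β * I t * S t) t)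
    (hI : ∀ t, 0 ≤ t → HasDerivAt I (β * I t * S t - γ * I t) t) (hS0 : 0 < S 0) :
    ∀ t, 0 ≤ t → 0 < S t :=
  pos_of_hasDerivAt_mul (g := fun t ↦ -β * I t)
    (fun t ht ↦ by simpa only [mul_assoc] using hS t ht)
    (continuousOn_const.mul (HasDerivAt.continuousOn hI)) hS0

theorem sir_I_pos (hS : ∀ t, 0 ≤ t → HasDerivAt S (-β * I t * S t) t)
    (hI : ∀ t, 0 ≤ t → HasDerivAt I (β * I t * S t - γ * I t) t) (hI0 : 0 < I 0) :
    ∀ t, 0 ≤ t → 0 < I t :=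
  pos_of_hasDerivAt_mul (g := fun t ↦ β * S t - γ)
    (fun t ht ↦ (hI t ht).congr_deriv (by ring))
    ((continuousOn_const.mul (HasDerivAt.continuousOn hS)).sub continuousOn_const) hI0

theorem sir_infection_rate_eq (hβ : β ≠ 0) (i s : ℝ) :
    β * i * s - γ * i = β * i * (s - γ / β) := by
  field_simp

theorem sir_S_strictAntiOn (hβ : 0 < β) (hS : ∀ t, 0 ≤ t → HasDerivAt S (-β * I t * S t) t)
    (hSpos : ∀ t, 0 ≤ t → 0 < S t) (hIpos : ∀ t, 0 ≤ t → 0 < I t) :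
    StrictAntiOn S (Ici 0) :=
  strictAntiOn_of_hasDerivWithinAt_neg (convex_Ici 0) (HasDerivAt.continuousOn hS)
    (fun t ht ↦ (hS t (interior_subset ht)).hasDerivWithinAt) fun t ht ↦ by
      have ht : 0 ≤ t := interior_subset ht
      have := mul_pos (mul_pos hβ (hIpos t ht)) (hSpos t ht)
      linarith

theorem sir_first_integral (hβ : β ≠ 0) (hS : ∀ t, 0 ≤ t → HasDerivAt S (-β * I t * S t) t)
    (hI : ∀ t, 0 ≤ t → HasDerivAt I (β * I t * S t - γ * I t) t)
    (hSpos : ∀ t, 0 ≤ t → 0 < S t) (t : ℝ) (ht : 0 ≤ t) :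
    I t + S t - γ / β * log (S t) = I 0 + S 0 - γ / β * log (S 0) := by
  have hV : ∀ s ∈ Icc 0 t, HasDerivAt (fun s ↦ I s + S s - γ / β * log (S s)) 0 s := by
    intro s hs
    have hSs := (hSpos s hs.1).ne'
    refine (((hI s hs.1).add (hS s hs.1)).sub (((hS s hs.1).log hSs).const_mul _)).congr_deriv ?_
    field_simp
    ring
  exact constant_of_has_deriv_right_zero (HasDerivAt.continuousOn hV)
    (fun s hs ↦ (hV s (Ico_subset_Icc_self hs)).hasDerivWithinAt) t ⟨ht, le_rfl⟩

theorem sir_exists_S_eq (hβ : 0 < β) (hγ : 0 < γ)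
    (hS : ∀ t, 0 ≤ t → HasDerivAt S (-β * I t * S t) t)
    (hI : ∀ t, 0 ≤ t → HasDerivAt I (β * I t * S t - γ * I t) t)
    (hIpos : ∀ t, 0 ≤ t → 0 < I t) (hS0 : γ / β < S 0) :
    ∃ t, 0 < t ∧ S t = γ / β := by
  obtain ⟨T, hT, hST⟩ : ∃ T ∈ Ici (0 : ℝ), S T ≤ γ / β := by
    by_contra! hSgt
    have hImono : MonotoneOn I (Ici 0) :=
      monotoneOn_of_hasDerivWithinAt_nonneg (convex_Ici 0) (HasDerivAt.continuousOn hI)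
        (fun t ht ↦ (hI t (interior_subset ht)).hasDerivWithinAt) fun t ht ↦ by
          have ht : 0 ≤ t := interior_subset ht
          rw [sir_infection_rate_eq hβ.ne']
          have := hSgt t ht
          have := hIpos t ht
          positivity
    have hS' : ∀ t ∈ Ici (0 : ℝ), -β * I t * S t ≤ -(γ * I 0) := fun t ht ↦ by
      have hγS : γ < β * S t := (div_lt_iff₀' hβ).mp (hSgt t ht)
      have hI0 : I 0 ≤ I t := hImono self_mem_Ici ht ht
      nlinarith [hIpos 0 le_rfl]
    obtain ⟨T, hT, hST⟩ := exists_le_of_hasDerivAt_le_neg (mul_pos hγ (hIpos 0 le_rfl)) hS hS'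
      (γ / β)
    exact (hST.trans_lt (hSgt T hT)).false
  obtain ⟨t, ht, hSt⟩ := intermediate_value_Icc' (mem_Ici.mp hT)
    ((HasDerivAt.continuousOn hS).mono Icc_subset_Ici_self) ⟨hST, hS0.le⟩
  refine ⟨t, ht.1.lt_of_ne ?_, hSt⟩
  rintro rfl
  exact hS0.ne' hSt

end SIR

theorem sir_infection_peak_general
    (β γ : ℝ) (hβ : 0 < β) (hγ : 0 < γ)
    (S I : ℝ → ℝ) (N₁ N₂ : ℝ)
    (hS : ∀ t, 0 ≤ t → HasDerivAt S (-β * I t * S t) t)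
    (hI : ∀ t, 0 ≤ t → HasDerivAt I (β * I t * S t - γ * I t) t)
    (hS0 : S 0 = N₁) (hI0 : I 0 = N₂)
    (hN₁ : γ / β < N₁) (hN₂ : 0 < N₂) :
    ∃ tI : ℝ, 0 < tI ∧ S tI = γ / β ∧
      (∀ t' : ℝ, 0 < t' → S t' = γ / β → t' = tI) ∧
      (∀ t, 0 ≤ t → t < tI → 0 < β * I t * S t - γ * I t) ∧
      (β * I tI * S tI - γ * I tI = 0) ∧
      (∀ t, tI < t → β * I t * S t - γ * I t < 0) ∧
      (∀ t, 0 ≤ t → t ≠ tI → I t < I tI) ∧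
      I tI = -(γ / β) + (γ / β) * Real.log (γ / β)
              + (N₁ + N₂ - (γ / β) * Real.log N₁) := by
  subst hS0 hI0
  have hSpos := sir_S_pos hS hI ((div_pos hγ hβ).trans hN₁)
  have hIpos := sir_I_pos hS hI hN₂
  have hSanti := sir_S_strictAntiOn hβ hS hSpos hIpos
  obtain ⟨tI, htI, hStI⟩ := sir_exists_S_eq hβ hγ hS hI hIpos hN₁
  have hrate (t : ℝ) := sir_infection_rate_eq (γ := γ) hβ.ne' (I t) (S t)
  have hpos (t : ℝ) (ht : 0 ≤ t) (htI' : t < tI) : 0 < β * I t * S t - γ * I t := by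
    rw [hrate]
    exact mul_pos (mul_pos hβ (hIpos t ht)) (sub_pos.mpr (hStI ▸ hSanti ht htI.le htI'))
  have hneg (t : ℝ) (htI' : tI < t) : β * I t * S t - γ * I t < 0 := by
    have ht : 0 ≤ t := htI.le.trans htI'.le
    rw [hrate]
    exact mul_neg_of_pos_of_neg (mul_pos hβ (hIpos t ht))
      (sub_neg.mpr (hStI ▸ hSanti htI.le ht htI'))
  refine ⟨tI, htI, hStI, fun t ht hSt ↦ hSanti.injOn ht.le htI.le (hSt.trans hStI.symm), hpos,
    by rw [hrate, hStI, sub_self, mul_zero], hneg,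
    apply_lt_of_hasDerivAt_pos_left_neg_right htI.le hI (fun t ht ↦ hpos t ht.1.le ht.2) hneg, ?_⟩
  have := sir_first_integral hβ.ne' hS hI hSpos tI htI.le
  rw [hStI] at this
  linarith

/-- Lemma 2. If `N₁ > γ/β` and `N₂ > 0`, there is a unique
time `t*_I > 0` with `S t*_I = γ/β`; moreover `I' > 0` on `[0, t*_I)`,
`I'(t*_I) = 0`, `I' < 0` for `t > t*_I`, so `I` attains a strict global maximum
over `[0,∞)` at `t*_I`, with peak value
`I t*_I = -γ/β + (γ/β)·ln(γ/β) + C_I`, `C_I = N₁ + N₂ - (γ/β)·ln N₁`. -/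
theorem sir_infection_peak
    (β γ : ℝ) (hβ : 0 < β) (hγ : 0 < γ)
    (S I R : ℝ → ℝ) (N₁ N₂ N₃ N : ℝ)
    (hS : ∀ t, 0 ≤ t → HasDerivAt S (-β * I t * S t) t)
    (hI : ∀ t, 0 ≤ t → HasDerivAt I (β * I t * S t - γ * I t) t)
    (hR : ∀ t, 0 ≤ t → HasDerivAt R (γ * I t) t)
    (hS0 : S 0 = N₁) (hI0 : I 0 = N₂) (hR0 : R 0 = N₃)
    (hN : N = N₁ + N₂ + N₃)
    (hN₁ : γ / β < N₁) (hN₂ : 0 < N₂) :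
    ∃ tI : ℝ, 0 < tI ∧ S tI = γ / β ∧
      (∀ t' : ℝ, 0 < t' → S t' = γ / β → t' = tI) ∧
      (∀ t, 0 ≤ t → t < tI → 0 < β * I t * S t - γ * I t) ∧
      (β * I tI * S tI - γ * I tI = 0) ∧
      (∀ t, tI < t → β * I t * S t - γ * I t < 0) ∧
      (∀ t, 0 ≤ t → t ≠ tI → I t < I tI) ∧
      I tI = -(γ / β) + (γ / β) * Real.log (γ / β)
              + (N₁ + N₂ - (γ / β) * Real.log N₁) :=
  sir_infection_peak_general β γ hβ hγ S I N₁ N₂ hS hI hS0 hI0 hN₁ hN₂
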